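/- Vanishing derivative at the origin for the logarithmic Volterra transform (Section 5): Fix 0 < c < 1 and κ > 1, let u(ξ) = (−log(cξ))^{−κ} for ξ ∈ (0,1] with u(0) = 0, and let u'(ξ) = κ (−log(cξ))^{−κ−1} / ξ. Then (i) w(x) := ∫₀^x log(x−ξ) u'(ξ) dξ → 0 as x → 0⁺, and (ii) F(x)/x → 0 as x → 0⁺, where F(x) = ∫₀^x log(x−ξ) u(ξ) dξ; in particular F, extended by F(0) = 0, has right derivative 0 at x = 0. -/

import Mathlib

/-!
Write `L x = -log (c x)`, so that `u = L ^ (-κ)` is increasing and `L x → ∞` as `x → 0⁺`;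
`F = logVolterra u` and `w = logVolterra u'`. Since `∫₀^x |log (x - ξ)| dξ = x - x log x`,
monotonicity of `u` gives `|F x| ≤ u x (x - x log x)`, hence `|F x / x| ≤ L ^ (-κ) (1 - log x)`,
which is `O(L ^ (1 - κ)) → 0` as `κ > 1`. For `w`, split `(0, x]` at `x / 2`: on `(x / 2, x]`
the weight `u' ≤ 2κ L(x) ^ (-κ - 1) / x` is integrated against `|log (x - ξ)|`, while on
`(0, x / 2]` the logarithm is at most `log (2 / x)` and `∫₀^x u' = u x`. Both pieces are again
`O(L ^ (1 - κ))`.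
-/
open MeasureTheory Filter Set Real Topology

lemma integrableOn_log_sub {x : ℝ} (hx : 0 ≤ x) :
    IntegrableOn (fun ξ => log (x - ξ)) (Ioc 0 x) := by
  rw [← intervalIntegrable_iff_integrableOn_Ioc_of_le hx]
  simpa using (intervalIntegral.intervalIntegrable_log' (a := x) (b := 0)).comp_sub_left x

lemma setIntegral_log_sub {x : ℝ} (hx : 0 ≤ x) :
    ∫ ξ in Ioc 0 x, log (x - ξ) = x * log x - x := by
  rw [← intervalIntegral.integral_of_le hx,
    intervalIntegral.integral_comp_sub_left (fun t => log t), integral_log]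
  simp

lemma log_sub_nonpos {x ξ : ℝ} (hx : x ≤ 1) (hξ : ξ ∈ Ioc 0 x) : log (x - ξ) ≤ 0 :=
  log_nonpos (by linarith [hξ.2]) (by linarith [hξ.1])

noncomputable def logVolterra (f : ℝ → ℝ) (x : ℝ) : ℝ := ∫ ξ in Ioc 0 x, log (x - ξ) * f ξ

@[simp]
lemma logVolterra_zero (f : ℝ → ℝ) : logVolterra f 0 = 0 := by simp [logVolterra]

lemma norm_logVolterra_le {x B : ℝ} {h : ℝ → ℝ} (hx : 0 ≤ x) (hx1 : x ≤ 1)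
    (hB : ∀ ξ ∈ Ioc 0 x, ‖h ξ‖ ≤ B) :
    ‖logVolterra h x‖ ≤ B * (x - x * log x) := by
  have hbound : ∀ ξ ∈ Ioc 0 x, ‖log (x - ξ) * h ξ‖ ≤ -B * log (x - ξ) := by
    intro ξ hξ
    rw [norm_mul, Real.norm_of_nonpos (log_sub_nonpos hx1 hξ)]
    nlinarith [hB ξ hξ, log_sub_nonpos hx1 hξ]
  calc ‖logVolterra h x‖ ≤ ∫ ξ in Ioc 0 x, -B * log (x - ξ) :=
        norm_integral_le_of_norm_le ((integrableOn_log_sub hx).const_mul _)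
          ((ae_restrict_iff' measurableSet_Ioc).2 (.of_forall hbound))
    _ = B * (x - x * log x) := by rw [integral_const_mul, setIntegral_log_sub hx]; ring

lemma norm_logVolterra_le_of_le_on_Ioc_half {x M : ℝ} {h : ℝ → ℝ} (hx : 0 < x)
    (hx1 : x ≤ 1) (hint : IntegrableOn h (Ioc 0 x)) (hnonneg : ∀ ξ ∈ Ioc 0 x, 0 ≤ h ξ)
    (hM : ∀ ξ ∈ Ioc (x / 2) x, h ξ ≤ M) :
    ‖logVolterra h x‖ ≤ M * (x - x * log x) + log (2 / x) * ∫ ξ in Ioc 0 x, h ξ := by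
  have hM0 : 0 ≤ M := (hnonneg x ⟨hx, le_rfl⟩).trans (hM x ⟨by linarith, le_rfl⟩)
  have hlog2x : 0 ≤ log (2 / x) := log_nonneg (by rw [le_div_iff₀ hx]; linarith)
  have hbound : ∀ ξ ∈ Ioc 0 x,
      ‖log (x - ξ) * h ξ‖ ≤ -M * log (x - ξ) + log (2 / x) * h ξ := by
    intro ξ hξ
    have hlog := log_sub_nonpos hx1 hξ
    rw [norm_mul, Real.norm_of_nonpos hlog, Real.norm_of_nonneg (hnonneg ξ hξ)]
    rcases le_or_gt ξ (x / 2) with hnear | hfar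
    · have : -log (x - ξ) ≤ log (2 / x) := by
        rw [← inv_div, log_inv, neg_le_neg_iff]
        exact log_le_log (by positivity) (by linarith)
      nlinarith [hnonneg ξ hξ]
    · nlinarith [hM ξ ⟨hfar, hξ.2⟩, hnonneg ξ hξ]
  calc ‖logVolterra h x‖
        ≤ ∫ ξ in Ioc 0 x, (-M * log (x - ξ) + log (2 / x) * h ξ) :=
        norm_integral_le_of_norm_le
          (((integrableOn_log_sub hx.le).const_mul _).add (hint.const_mul _))
          ((ae_restrict_iff' measurableSet_Ioc).2 (.of_forall hbound))
    _ = M * (x - x * log x) + log (2 / x) * ∫ ξ in Ioc 0 x, h ξ := by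
        rw [integral_add ((integrableOn_log_sub hx.le).const_mul _) (hint.const_mul _),
          integral_const_mul, integral_const_mul, setIntegral_log_sub hx.le]
        ring

lemma setIntegral_Ioc_eq_sub_of_hasDerivAt_of_nonneg {g g' : ℝ → ℝ} {a b : ℝ} (hab : a ≤ b)
    (hcont : ContinuousOn g (Icc a b)) (hderiv : ∀ x ∈ Ioo a b, HasDerivAt g (g' x) x)
    (hpos : ∀ x ∈ Ioo a b, 0 ≤ g' x) :
    ∫ x in Ioc a b, g' x = g b - g a := by
  have hint := intervalIntegral.integrableOn_deriv_of_nonneg hcont hderiv hpos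
  rw [← intervalIntegral.integral_of_le hab]
  exact intervalIntegral.integral_eq_sub_of_hasDeriv_right_of_le hab hcont
    (fun x hx => (hderiv x hx).hasDerivWithinAt)
    ((intervalIntegrable_iff_integrableOn_Ioc_of_le hab).2 hint)

lemma hasDerivWithinAt_Ici_zero_of_tendsto_div {F : ℝ → ℝ} {d : ℝ} (hF0 : F 0 = 0)
    (hF : Tendsto (fun x => F x / x) (𝓝[>] 0) (𝓝 d)) : HasDerivWithinAt F d (Ici 0) 0 := by
  rw [← hasDerivWithinAt_Ioi_iff_Ici, hasDerivWithinAt_iff_tendsto_slope' self_notMem_Ioi]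
  refine hF.congr fun x => ?_
  rw [slope_def_field, hF0, sub_zero, sub_zero]

lemma tendsto_rpow_neg_mul_add_atTop {p : ℝ} (hp : 1 < p) (A : ℝ) :
    Tendsto (fun t : ℝ => t ^ (-p) * (A + t)) atTop (𝓝 0) := by
  have hlim : Tendsto (fun t : ℝ => A * t ^ (-p) + t ^ (-(p - 1))) atTop (𝓝 0) := by
    simpa using ((tendsto_rpow_neg_atTop (by linarith)).const_mul A).add
      (tendsto_rpow_neg_atTop (by linarith : 0 < p - 1))
  refine hlim.congr' ?_
  filter_upwards [eventually_gt_atTop 0] with t ht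
  rw [show -(p - 1) = -p + 1 by ring, rpow_add ht, rpow_one]
  ring

section LogPower

variable {c : ℝ}

lemma tendsto_neg_log_mul_nhdsGT_zero (hc : 0 < c) :
    Tendsto (fun x => -log (c * x)) (𝓝[>] 0) atTop := by
  have hlim : Tendsto (fun x => -log c + -log x) (𝓝[>] 0) atTop :=
    tendsto_atTop_add_const_left _ _ (tendsto_neg_atBot_atTop.comp tendsto_log_nhdsGT_zero)
  refine hlim.congr' ?_
  filter_upwards [self_mem_nhdsWithin] with x hx
  rw [log_mul hc.ne' (ne_of_gt hx)]
  ring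

lemma tendsto_neg_log_mul_rpow_neg_mul_sub_log (hc : 0 < c) {p : ℝ} (hp : 1 < p) (A : ℝ) :
    Tendsto (fun x => (-log (c * x)) ^ (-p) * (A - log x)) (𝓝[>] 0) (𝓝 0) := by
  refine ((tendsto_rpow_neg_mul_add_atTop hp (A + log c)).comp
    (tendsto_neg_log_mul_nhdsGT_zero hc)).congr' ?_
  filter_upwards [self_mem_nhdsWithin] with x hx
  simp only [Function.comp_apply, log_mul hc.ne' (ne_of_gt hx)]
  ring_nf

lemma neg_log_mul_pos (hc : c ∈ Ioo 0 1) {x : ℝ} (hx : x ∈ Ioc 0 1) : 0 < -log (c * x) := by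
  have : c * x < 1 := by nlinarith [hc.1, hc.2, hx.1, hx.2]
  linarith [log_neg (mul_pos hc.1 hx.1) this]

lemma neg_log_mul_rpow_neg_le (hc : c ∈ Ioo 0 1) {p x ξ : ℝ} (hp : 0 ≤ p) (hξ : ξ ∈ Ioc 0 x)
    (hx : x ≤ 1) : (-log (c * ξ)) ^ (-p) ≤ (-log (c * x)) ^ (-p) := by
  refine rpow_le_rpow_of_nonpos (neg_log_mul_pos hc ⟨hξ.1.trans_le hξ.2, hx⟩) ?_ (by linarith)
  exact neg_le_neg (log_le_log (mul_pos hc.1 hξ.1) (mul_le_mul_of_nonneg_left hξ.2 hc.1.le))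

lemma hasDerivAt_neg_log_mul_rpow (hc : c ∈ Ioo 0 1) {κ ξ : ℝ} (hξ : ξ ∈ Ioc 0 1) :
    HasDerivAt (fun t => (-log (c * t)) ^ (-κ)) (κ * (-log (c * ξ)) ^ (-κ - 1) / ξ) ξ := by
  have hinner : HasDerivAt (fun t => -log (c * t)) (-ξ⁻¹) ξ := by
    have hlin : HasDerivAt (fun t => c * t) c ξ := by simpa using (hasDerivAt_id ξ).const_mul c
    have h := (hlin.log (mul_pos hc.1 hξ.1).ne').neg
    rwa [div_mul_cancel_left₀ hc.1.ne'] at h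
  convert (hinner.rpow_const (p := -κ) (Or.inl (neg_log_mul_pos hc hξ).ne')) using 1
  field_simp

end LogPower

section VolterraLogPower

variable {c κ : ℝ} {u u' : ℝ → ℝ}

lemma hasDerivAt_of_eq_neg_log_mul_rpow (hc : c ∈ Ioo 0 1)
    (hu : ∀ ξ : ℝ, 0 < ξ → u ξ = (-log (c * ξ)) ^ (-κ))
    (hu' : ∀ ξ : ℝ, 0 < ξ → u' ξ = κ * (-log (c * ξ)) ^ (-κ - 1) / ξ) {ξ : ℝ}
    (hξ : ξ ∈ Ioc 0 1) : HasDerivAt u (u' ξ) ξ := by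
  rw [hu' ξ hξ.1]
  refine (hasDerivAt_neg_log_mul_rpow hc hξ).congr_of_eventuallyEq ?_
  filter_upwards [Ioi_mem_nhds hξ.1] with t ht
  exact hu t ht

lemma deriv_nonneg_of_eq_neg_log_mul_rpow (hc : c ∈ Ioo 0 1) (hκ : 0 ≤ κ)
    (hu' : ∀ ξ : ℝ, 0 < ξ → u' ξ = κ * (-log (c * ξ)) ^ (-κ - 1) / ξ) {ξ : ℝ}
    (hξ : ξ ∈ Ioc 0 1) : 0 ≤ u' ξ := by
  rw [hu' ξ hξ.1]
  exact div_nonneg (mul_nonneg hκ (rpow_nonneg (neg_log_mul_pos hc hξ).le _)) hξ.1.le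

lemma continuousOn_of_eq_neg_log_mul_rpow (hc : c ∈ Ioo 0 1) (hκ : 0 < κ)
    (hu : ∀ ξ : ℝ, 0 < ξ → u ξ = (-log (c * ξ)) ^ (-κ)) (hu0 : u 0 = 0)
    (hu' : ∀ ξ : ℝ, 0 < ξ → u' ξ = κ * (-log (c * ξ)) ^ (-κ - 1) / ξ) :
    ContinuousOn u (Icc 0 1) := by
  rintro ξ ⟨hξ0, hξ1⟩
  rcases hξ0.eq_or_lt with rfl | hξ0
  · have hlim : Tendsto u (𝓝[>] 0) (𝓝 (u 0)) := by
      rw [hu0]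
      refine ((tendsto_rpow_neg_atTop hκ).comp (tendsto_neg_log_mul_nhdsGT_zero hc.1)).congr' ?_
      filter_upwards [self_mem_nhdsWithin] with t ht
      exact (hu t ht).symm
    exact (continuousWithinAt_Ioi_iff_Ici.1 hlim).mono Icc_subset_Ici_self
  · exact (hasDerivAt_of_eq_neg_log_mul_rpow hc hu hu' ⟨hξ0, hξ1⟩).continuousAt.continuousWithinAt

lemma setIntegral_deriv_eq_of_eq_neg_log_mul_rpow (hc : c ∈ Ioo 0 1) (hκ : 0 < κ)
    (hu : ∀ ξ : ℝ, 0 < ξ → u ξ = (-log (c * ξ)) ^ (-κ)) (hu0 : u 0 = 0)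
    (hu' : ∀ ξ : ℝ, 0 < ξ → u' ξ = κ * (-log (c * ξ)) ^ (-κ - 1) / ξ) {x : ℝ}
    (hx : x ∈ Icc 0 1) : IntegrableOn u' (Ioc 0 x) ∧ ∫ ξ in Ioc 0 x, u' ξ = u x := by
  have hcont := (continuousOn_of_eq_neg_log_mul_rpow hc hκ hu hu0 hu').mono
    (Icc_subset_Icc_right hx.2)
  have hderiv : ∀ ξ ∈ Ioo 0 x, HasDerivAt u (u' ξ) ξ := fun ξ hξ =>
    hasDerivAt_of_eq_neg_log_mul_rpow hc hu hu' ⟨hξ.1, hξ.2.le.trans hx.2⟩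
  have hpos : ∀ ξ ∈ Ioo 0 x, 0 ≤ u' ξ := fun ξ hξ =>
    deriv_nonneg_of_eq_neg_log_mul_rpow hc hκ.le hu' ⟨hξ.1, hξ.2.le.trans hx.2⟩
  refine ⟨intervalIntegral.integrableOn_deriv_of_nonneg hcont hderiv hpos, ?_⟩
  rw [setIntegral_Ioc_eq_sub_of_hasDerivAt_of_nonneg hx.1 hcont hderiv hpos, hu0, sub_zero]

lemma deriv_le_on_Ioc_half_of_eq_neg_log_mul_rpow (hc : c ∈ Ioo 0 1) (hκ : 0 ≤ κ)
    (hu' : ∀ ξ : ℝ, 0 < ξ → u' ξ = κ * (-log (c * ξ)) ^ (-κ - 1) / ξ) {x ξ : ℝ}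
    (hx : x ∈ Ioc 0 1) (hξ : ξ ∈ Ioc (x / 2) x) :
    u' ξ ≤ 2 * κ * (-log (c * x)) ^ (-(κ + 1)) / x := by
  have hξ0 : 0 < ξ := by linarith [hξ.1, hx.1]
  have hle := neg_log_mul_rpow_neg_le hc (by linarith : 0 ≤ κ + 1) ⟨hξ0, hξ.2⟩ hx.2
  have hLx := neg_log_mul_pos hc hx
  calc u' ξ = κ * (-log (c * ξ)) ^ (-(κ + 1)) / ξ := by rw [hu' ξ hξ0, neg_add']
    _ ≤ κ * (-log (c * x)) ^ (-(κ + 1)) / (x / 2) := by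
        gcongr
        · linarith [hx.1]
        · exact hξ.1.le
    _ = 2 * κ * (-log (c * x)) ^ (-(κ + 1)) / x := by field_simp

lemma tendsto_logVolterra_div_self (hc : c ∈ Ioo 0 1) (hκ : 1 < κ)
    (hu : ∀ ξ : ℝ, 0 < ξ → u ξ = (-log (c * ξ)) ^ (-κ)) :
    Tendsto (fun x => logVolterra u x / x) (𝓝[>] 0) (𝓝 0) := by
  refine squeeze_zero_norm' ?_ (tendsto_neg_log_mul_rpow_neg_mul_sub_log hc.1 hκ 1)
  filter_upwards [Ioo_mem_nhdsGT one_pos] with x hx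
  have hbound : ∀ ξ ∈ Ioc 0 x, ‖u ξ‖ ≤ u x := by
    intro ξ hξ
    rw [hu ξ hξ.1, hu x hx.1, norm_of_nonneg
      (rpow_nonneg (neg_log_mul_pos hc ⟨hξ.1, hξ.2.trans hx.2.le⟩).le _)]
    exact neg_log_mul_rpow_neg_le hc (by linarith) hξ hx.2.le
  calc ‖logVolterra u x / x‖ = ‖logVolterra u x‖ / x := by rw [norm_div, norm_of_nonneg hx.1.le]
    _ ≤ u x * (x - x * log x) / x :=
        div_le_div_of_nonneg_right (norm_logVolterra_le hx.1.le hx.2.le hbound) hx.1.le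
    _ = (-log (c * x)) ^ (-κ) * (1 - log x) := by
        rw [hu x hx.1]
        field_simp [hx.1.ne']

lemma tendsto_logVolterra_deriv (hc : c ∈ Ioo 0 1) (hκ : 1 < κ)
    (hu : ∀ ξ : ℝ, 0 < ξ → u ξ = (-log (c * ξ)) ^ (-κ)) (hu0 : u 0 = 0)
    (hu' : ∀ ξ : ℝ, 0 < ξ → u' ξ = κ * (-log (c * ξ)) ^ (-κ - 1) / ξ) :
    Tendsto (logVolterra u') (𝓝[>] 0) (𝓝 0) := by
  have hκ0 : 0 < κ := by linarith
  have hlim := ((tendsto_neg_log_mul_rpow_neg_mul_sub_log hc.1 (by linarith : 1 < κ + 1) 1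
    ).const_mul (2 * κ)).add (tendsto_neg_log_mul_rpow_neg_mul_sub_log hc.1 hκ (log 2))
  rw [mul_zero, add_zero] at hlim
  refine squeeze_zero_norm' ?_ hlim
  filter_upwards [Ioo_mem_nhdsGT one_pos] with x hx
  obtain ⟨hint, hintegral⟩ :=
    setIntegral_deriv_eq_of_eq_neg_log_mul_rpow hc hκ0 hu hu0 hu' ⟨hx.1.le, hx.2.le⟩
  have hnonneg : ∀ ξ ∈ Ioc 0 x, 0 ≤ u' ξ := fun ξ hξ =>
    deriv_nonneg_of_eq_neg_log_mul_rpow hc hκ0.le hu' ⟨hξ.1, hξ.2.trans hx.2.le⟩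
  have hle : ∀ ξ ∈ Ioc (x / 2) x, u' ξ ≤ 2 * κ * (-log (c * x)) ^ (-(κ + 1)) / x :=
    fun ξ hξ => deriv_le_on_Ioc_half_of_eq_neg_log_mul_rpow hc hκ0.le hu' ⟨hx.1, hx.2.le⟩ hξ
  calc ‖logVolterra u' x‖
      ≤ 2 * κ * (-log (c * x)) ^ (-(κ + 1)) / x * (x - x * log x) + log (2 / x) * u x := by
        rw [← hintegral]
        exact norm_logVolterra_le_of_le_on_Ioc_half hx.1 hx.2.le hint hnonneg hle
    _ = 2 * κ * ((-log (c * x)) ^ (-(κ + 1)) * (1 - log x)) +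
          (-log (c * x)) ^ (-κ) * (log 2 - log x) := by
        rw [hu x hx.1, log_div two_ne_zero hx.1.ne']
        field_simp [hx.1.ne']

end VolterraLogPower

/-- Vanishing derivative at the origin for the logarithmic Volterra transform
(Section 5). -/
theorem stmt17 (c κ : ℝ) (hc : c ∈ Set.Ioo (0:ℝ) 1) (hκ : 1 < κ)
    (u u' : ℝ → ℝ)
    (hu : ∀ ξ : ℝ, 0 < ξ → u ξ = (-Real.log (c * ξ)) ^ (-κ)) (hu0 : u 0 = 0)
    (hu' : ∀ ξ : ℝ, 0 < ξ → u' ξ = κ * (-Real.log (c * ξ)) ^ (-κ - 1) / ξ) :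
    Filter.Tendsto (fun x : ℝ => ∫ ξ in Set.Ioc (0:ℝ) x, Real.log (x - ξ) * u' ξ)
      (nhdsWithin 0 (Set.Ioi 0)) (nhds 0) ∧
    Filter.Tendsto
      (fun x : ℝ => (∫ ξ in Set.Ioc (0:ℝ) x, Real.log (x - ξ) * u ξ) / x)
      (nhdsWithin 0 (Set.Ioi 0)) (nhds 0) ∧
    HasDerivWithinAt (fun x : ℝ => ∫ ξ in Set.Ioc (0:ℝ) x, Real.log (x - ξ) * u ξ)
      0 (Set.Ici 0) 0 := by
  have hF := tendsto_logVolterra_div_self hc hκ hu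
  exact ⟨tendsto_logVolterra_deriv hc hκ hu hu0 hu', hF,
    hasDerivWithinAt_Ici_zero_of_tendsto_div (logVolterra_zero u) hF⟩
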